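/- Let G be a simple graph. The following are equivalent: (1) there exist a nonempty index type ι and an injective map f from the vertices of G to functions ι → Fin 3 such that whenever u and v are adjacent in G, f(u)(i) ≠ f(v)(i) for every i ∈ ι (that is, G is isomorphic to a not-necessarily-induced subgraph of a nonempty direct power of the complete graph K₃); (2) G has a proper 3-colouring, and for every pair of distinct nonadjacent vertices u, v of G there is a proper 3-colouring c of G with c(u) ≠ c(v). -/

import Mathlib

universe u

/-
The forward direction reads colourings off the coordinates of the embedding. Conversely, the
proper colourings themselves index the power: evaluation `v ↦ (C ↦ C v)` is coordinatewise proper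
and, when distinct nonadjacent vertices are separated by some colouring, injective.
-/

namespace SimpleGraph

variable {V α : Type*} {G : SimpleGraph V}

theorem injective_eval_coloring [Nonempty (G.Coloring α)]
    (hsep : ∀ u v, u ≠ v → ¬G.Adj u v → ∃ C : G.Coloring α, C u ≠ C v) :
    Function.Injective fun v (C : G.Coloring α) => C v := by
  intro u v huv
  by_contra hne
  by_cases hadj : G.Adj u v
  · obtain ⟨C⟩ := ‹Nonempty (G.Coloring α)›
    exact C.valid hadj (congrFun huv C)
  · obtain ⟨C, hC⟩ := hsep u v hne hadj
    exact hC (congrFun huv C)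

end SimpleGraph

theorem stmt_2 {V : Type u} (G : SimpleGraph V) :
    (∃ (ι : Type u) (_ : Nonempty ι) (f : V → ι → Fin 3),
      Function.Injective f ∧ ∀ u v : V, G.Adj u v → ∀ i : ι, f u i ≠ f v i) ↔
    ((∃ c : V → Fin 3, ∀ u v : V, G.Adj u v → c u ≠ c v) ∧
      ∀ u v : V, u ≠ v → ¬ G.Adj u v →
        ∃ c : V → Fin 3, (∀ x y : V, G.Adj x y → c x ≠ c y) ∧ c u ≠ c v) := by
  constructor
  · rintro ⟨ι, ⟨i₀⟩, f, hinj, hadj⟩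
    refine ⟨⟨fun v => f v i₀, fun u v h => hadj u v h i₀⟩, fun u v huv _ => ?_⟩
    obtain ⟨i, hi⟩ := Function.ne_iff.mp (hinj.ne huv)
    exact ⟨fun v => f v i, fun x y h => hadj x y h i, hi⟩
  · rintro ⟨⟨c₀, hc₀⟩, hsep⟩
    have : Nonempty (G.Coloring (Fin 3)) := ⟨SimpleGraph.Coloring.mk c₀ (hc₀ _ _)⟩
    refine ⟨G.Coloring (Fin 3), inferInstance, fun v C => C v, G.injective_eval_coloring ?_,
      fun u v h C => C.valid h⟩
    intro u v hne hnadj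
    obtain ⟨c, hc, huv⟩ := hsep u v hne hnadj
    exact ⟨SimpleGraph.Coloring.mk c (hc _ _), huv⟩
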